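/- arXiv:1104.3463 — 2 statements merged into one kernel-verified Lean document; each statement's English description precedes it below -/
import Mathlib

section
/- Let G be a finite simple graph on at least 3 vertices that is not in BP2. Then every pair of distinct vertices that are nonadjacent in the complement graph Ḡ has a common neighbour in Ḡ. -/
/-- The induced subgraph of `G` on the vertex set `s` is covered by a single biclique. -/
def BP1On {V : Type*} (G : SimpleGraph V) (s : Set V) : Prop :=
  (∃ v, s = {v}) ∨
    ∃ A B : Set V, A.Nonempty ∧ B.Nonempty ∧ Disjoint A B ∧ A ∪ B = s ∧
      ∀ a ∈ A, ∀ b ∈ B, G.Adj a b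

/-- The induced subgraph of `G` on `s` can be partitioned into at most two parts,
each of which induces a graph in BP1. -/
def BP2On {V : Type*} (G : SimpleGraph V) (s : Set V) : Prop :=
  BP1On G s ∨
    ∃ A B : Set V, A.Nonempty ∧ B.Nonempty ∧ Disjoint A B ∧ A ∪ B = s ∧
      BP1On G A ∧ BP1On G B

/-!
If `u ≠ v` had no common neighbour in `Gᶜ`, every other vertex would be adjacent in `G` to `u`
or to `v`. Splitting the vertices into `u` with its `G`-neighbours (other than `v`) and the rest
gives two stars, centred at `u` and at `v`; a star is a biclique, so `G` would be in BP2.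
-/

namespace SimpleGraph

variable {V : Type*} (G : SimpleGraph V)

lemma bp1On_of_forall_adj {s : Set V} {a : V} (ha : a ∈ s)
    (hadj : ∀ b ∈ s, b ≠ a → G.Adj a b) : BP1On G s := by
  by_cases hs : s = {a}
  · exact Or.inl ⟨a, hs⟩
  refine Or.inr ⟨{a}, s \ {a}, Set.singleton_nonempty a, ?_, Set.disjoint_sdiff_right,
    Set.union_sdiff_cancel (Set.singleton_subset_iff.mpr ha), ?_⟩
  · exact Set.sdiff_nonempty.mpr fun hsub => hs (Set.Subset.antisymm hsub (by simpa using ha))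
  · rintro x rfl b ⟨hb, hba⟩
    exact hadj b hb hba

lemma bp2On_univ_of_forall_adj_or_adj {u v : V} (huv : u ≠ v)
    (hcover : ∀ w, w ≠ u → w ≠ v → G.Adj u w ∨ G.Adj v w) : BP2On G Set.univ := by
  set A : Set V := insert u {w | G.Adj u w ∧ w ≠ v}
  have hvA : v ∉ A := by simp [A, huv.symm]
  refine Or.inr ⟨A, Aᶜ, ⟨u, Set.mem_insert ..⟩, ⟨v, hvA⟩, disjoint_compl_right,
    Set.union_compl_self A, bp1On_of_forall_adj G (Set.mem_insert ..) ?_,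
    bp1On_of_forall_adj G hvA ?_⟩
  · rintro b (rfl | ⟨hub, -⟩) hbu
    exacts [absurd rfl hbu, hub]
  · intro b hbA hbv
    have hbu : b ≠ u := fun hbu => hbA (hbu ▸ Set.mem_insert ..)
    have hub : ¬ G.Adj u b := fun hub => hbA (Set.mem_insert_of_mem _ ⟨hub, hbv⟩)
    exact (hcover b hbu hbv).resolve_left hub

end SimpleGraph

theorem compl_common_neighbor_general {V : Type*} (G : SimpleGraph V)
    (h : ¬ BP2On G Set.univ) :
    ∀ u v : V, u ≠ v → ¬ Gᶜ.Adj u v → ∃ w : V, Gᶜ.Adj u w ∧ Gᶜ.Adj v w := by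
  intro u v huv _
  by_contra! hnone
  refine h (G.bp2On_univ_of_forall_adj_or_adj huv fun w hwu hwv => ?_)
  by_contra! hnadj
  exact hnone w ((G.compl_adj u w).mpr ⟨hwu.symm, hnadj.1⟩)
    ((G.compl_adj v w).mpr ⟨hwv.symm, hnadj.2⟩)

/-- If a finite simple graph `G` on at least three vertices is not in BP2, then every pair
of distinct vertices that are nonadjacent in the complement `Gᶜ` has a common neighbour
in `Gᶜ`. -/
theorem compl_common_neighbor {V : Type*} [Fintype V] (G : SimpleGraph V)
    (h3 : 3 ≤ Fintype.card V) (h : ¬ BP2On G Set.univ) :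
    ∀ u v : V, u ≠ v → ¬ Gᶜ.Adj u v → ∃ w : V, Gᶜ.Adj u w ∧ Gᶜ.Adj v w :=
  compl_common_neighbor_general G h
end

section
/- Let G be a finite simple graph in BP2 but not in BP1 such that G admits no star-biclique partition. Then for every vertex v of G, the graph G − v is also in BP2 but not in BP1. -/
/-- The induced subgraph of `G` on `s` admits a star-biclique partition: a partition of `s`
into two nonempty parts `S` and `T` such that `S` is covered by a star of `G` and `G[T]`
is in BP1. -/
def SBPOn {V : Type*} (G : SimpleGraph V) (s : Set V) : Prop :=
  ∃ S T : Set V, S.Nonempty ∧ T.Nonempty ∧ Disjoint S T ∧ S ∪ T = s ∧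
    (∃ v ∈ S, ∀ u ∈ S, u ≠ v → G.Adj v u) ∧ BP1On G T

/-!
Write `V = A ⊔ B` with `G[A]`, `G[B]` in BP1 and `v ∈ A`. Removing `v` from a biclique either
leaves a biclique or shows that `v` was the centre of a star covering it; the latter would make
`(A, B)` a star-biclique partition, so `A ∖ {v}` is a biclique and `(A ∖ {v}, B)` witnesses that
`G - v` is in BP2. If `G - v` were in BP1, then `({v}, V ∖ {v})` would be a star-biclique partition.
-/

section

variable {V : Type*} {G : SimpleGraph V} {s : Set V} {v : V}

theorem BP1On.nonempty (h : BP1On G s) : s.Nonempty := by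
  rcases h with ⟨w, rfl⟩ | ⟨A, B, hA, -, -, rfl, -⟩
  · exact Set.singleton_nonempty w
  · exact hA.mono Set.subset_union_left

theorem bp1On_sdiff_singleton_or_star_of_biclique {X Y : Set V} (hY : Y.Nonempty)
    (hXY : Disjoint X Y) (hadj : ∀ a ∈ X, ∀ b ∈ Y, G.Adj a b) (hv : v ∈ X) :
    BP1On G ((X ∪ Y) \ {v}) ∨ ∀ u ∈ X ∪ Y, u ≠ v → G.Adj v u := by
  by_cases hX : (X \ {v}).Nonempty
  · refine .inl (.inr ⟨X \ {v}, Y, hX, hY, hXY.mono_left Set.sdiff_subset, ?_,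
      fun a ha b hb => hadj a ha.1 b hb⟩)
    rw [Set.union_sdiff_distrib, Set.sdiff_singleton_eq_self (hXY.notMem_of_mem_left hv)]
  · right
    rintro u (huX | huY) huv
    · exact absurd ⟨u, huX, huv⟩ hX
    · exact hadj v hv u huY

theorem BP1On.sdiff_singleton_or_star (h : BP1On G s) (hv : v ∈ s) :
    BP1On G (s \ {v}) ∨ ∀ u ∈ s, u ≠ v → G.Adj v u := by
  rcases h with ⟨w, rfl⟩ | ⟨X, Y, hX, hY, hXY, rfl, hadj⟩
  · exact .inr fun u hu huv => absurd (hu.trans hv.symm) huv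
  · rcases hv with hvX | hvY
    · exact bp1On_sdiff_singleton_or_star_of_biclique hY hXY hadj hvX
    · rw [Set.union_comm]
      exact bp1On_sdiff_singleton_or_star_of_biclique hX hXY.symm
        (fun a ha b hb => (hadj b hb a ha).symm) hvY

theorem bp2On_sdiff_singleton_of_not_sbpOn {A B : Set V} (hA : BP1On G A) (hB : BP1On G B)
    (hAB : Disjoint A B) (hs : A ∪ B = s) (hv : v ∈ A) (hnsbp : ¬ SBPOn G s) :
    BP2On G (s \ {v}) := by
  rcases hA.sdiff_singleton_or_star hv with hA' | hstar
  · refine .inr ⟨A \ {v}, B, hA'.nonempty, hB.nonempty, hAB.mono_left Set.sdiff_subset, ?_,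
      hA', hB⟩
    rw [← hs, Set.union_sdiff_distrib, Set.sdiff_singleton_eq_self (hAB.notMem_of_mem_left hv)]
  · exact absurd ⟨A, B, ⟨v, hv⟩, hB.nonempty, hAB, hs, ⟨v, hv, hstar⟩, hB⟩ hnsbp

theorem sbpOn_of_bp1On_sdiff_singleton (hv : v ∈ s) (h : BP1On G (s \ {v})) : SBPOn G s :=
  ⟨{v}, s \ {v}, Set.singleton_nonempty v, h.nonempty, Set.disjoint_sdiff_right,
    Set.union_sdiff_cancel (Set.singleton_subset_iff.mpr hv),
    ⟨v, rfl, fun _ hu huv => absurd hu huv⟩, h⟩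

end

theorem delete_vertex_bp2_not_bp1_general {V : Type*} (G : SimpleGraph V)
    (hbp2 : BP2On G Set.univ) (hnbp1 : ¬ BP1On G Set.univ)
    (hnsbp : ¬ SBPOn G Set.univ) (v : V) :
    BP2On G ({v}ᶜ : Set V) ∧ ¬ BP1On G ({v}ᶜ : Set V) := by
  obtain hbp1 | ⟨A, B, -, -, hAB, hAB_univ, hA, hB⟩ := hbp2
  · exact absurd hbp1 hnbp1
  rw [Set.compl_eq_univ_sdiff]
  refine ⟨?_, fun h => hnsbp (sbpOn_of_bp1On_sdiff_singleton (Set.mem_univ v) h)⟩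
  rcases (hAB_univ ▸ Set.mem_univ v : v ∈ A ∪ B) with hvA | hvB
  · exact bp2On_sdiff_singleton_of_not_sbpOn hA hB hAB hAB_univ hvA hnsbp
  · exact bp2On_sdiff_singleton_of_not_sbpOn hB hA hAB.symm (Set.union_comm B A ▸ hAB_univ)
      hvB hnsbp

/-- If a finite simple graph `G` is in BP2 but not in BP1 and admits no star-biclique
partition, then for every vertex `v`, the graph `G - v` is also in BP2 but not in BP1. -/
theorem delete_vertex_bp2_not_bp1 {V : Type*} [Fintype V] (G : SimpleGraph V)
    (hbp2 : BP2On G Set.univ) (hnbp1 : ¬ BP1On G Set.univ)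
    (hnsbp : ¬ SBPOn G Set.univ) (v : V) :
    BP2On G ({v}ᶜ : Set V) ∧ ¬ BP1On G ({v}ᶜ : Set V) :=
  delete_vertex_bp2_not_bp1_general G hbp2 hnbp1 hnsbp v
end
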